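/- Quasi-optimality of the KL-optimal profile: for any 0 < α ≤ 1 and any feature map φ_r, the measures π_{α,r}^opt (with profile (E_μ[ℓ^α|φ_r])^{1/α}) and π_{1,r}^opt (with profile E_μ[ℓ|φ_r]) satisfy D_α(π ‖ π_{α,r}^opt) ≤ D_α(π ‖ π_{1,r}^opt) ≤ (1/α) D_α(π ‖ π_{α,r}^opt). -/

import Mathlib

open MeasureTheory

/-- The Amari α-divergence between measures given by normalized densities `p, q`
with respect to `μ`, with the KL divergence recovered at `α = 1`. -/
noncomputable def amariDiv {X : Type*} [MeasurableSpace X] (μ : Measure X)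
    (α : ℝ) (p q : X → ℝ) : ℝ :=
  if α = 1 then ∫ x, Real.log (p x / q x) * p x ∂μ
  else (1 / (α * (α - 1))) * ((∫ x, (p x / q x) ^ α * q x ∂μ) - 1)

/-!
Write `g = E[ℓ^α | m]`, so that the profile of `π_{α,r}^opt` is `Lα = g^{1/α}` and that of
`π_{1,r}^opt` is `L1 = E[ℓ | m]`. For `α < 1`, `D_α(π ‖ q)` is a decreasing affine function of the
affinity `∫ p^α q^{1-α}`. By the tower property, `∫ ℓ^α L^{1-α} = ∫ Lα^α L^{1-α}` for every
`m`-measurable `L`; hence the affinity with `π_{α,r}^opt` is `t^α` with `t = Zα / Zπ`, while the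
affinity `s` with `π_{1,r}^opt` satisfies `t ≤ s` (conditional Jensen gives `Lα ≤ L1`) and
`s ≤ t^α` (Hölder). The first inequality follows, and Bernoulli's inequality
`t^α ≤ 1 + α (t - 1) ≤ 1 + α (s - 1)` gives the second.
-/

lemma Real.rpow_mul_rpow_one_sub {x : ℝ} (hx : 0 ≤ x) (α : ℝ) : x ^ α * x ^ (1 - α) = x := by
  rw [← Real.rpow_add' hx (by simp), add_sub_cancel, Real.rpow_one]

lemma Real.div_rpow_mul_self {p q α : ℝ} (hp : 0 ≤ p) (hq : 0 ≤ q) (hα : α ≠ 1) :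
    (p / q) ^ α * q = p ^ α * q ^ (1 - α) := by
  rcases hq.eq_or_lt with rfl | hq
  · rw [Real.zero_rpow (sub_ne_zero.2 hα.symm)]
    simp
  rw [Real.div_rpow hp hq.le, Real.rpow_sub hq, Real.rpow_one]
  field_simp

lemma Real.div_rpow_eq_rpow_mul_rpow_one_sub_div {a z : ℝ} (ha : 0 ≤ a) (hz : 0 < z) (α : ℝ) :
    (a / z) ^ α = a ^ α * z ^ (1 - α) / z := by
  rw [Real.div_rpow ha hz.le, mul_div_assoc, ← Real.rpow_sub_one hz.ne', sub_sub_cancel_left,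
    Real.rpow_neg hz.le, div_eq_mul_inv]

lemma Real.div_mul_rpow_one_sub_eq_div_rpow {a z : ℝ} (ha : 0 < a) (hz : 0 ≤ z) (α : ℝ) :
    a / (z ^ α * a ^ (1 - α)) = (a / z) ^ α := by
  rw [Real.div_rpow ha.le hz, div_mul_eq_div_div, div_right_comm]
  congr 1
  rw [div_eq_iff (Real.rpow_pos_of_pos ha _).ne', Real.rpow_mul_rpow_one_sub ha.le]

section Integral

variable {X : Type*} {m m0 : MeasurableSpace X} {μ : Measure X} {f g : X → ℝ} {α : ℝ}

theorem MeasureTheory.Integrable.rpow_mul_rpow_one_sub (hf : Integrable f μ) (hg : Integrable g μ)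
    (hf0 : 0 ≤ᵐ[μ] f) (hg0 : 0 ≤ᵐ[μ] g) (hα0 : 0 ≤ α) (hα1 : α ≤ 1) :
    Integrable (fun x => f x ^ α * g x ^ (1 - α)) μ := by
  refine ((hf.const_mul α).add (hg.const_mul (1 - α))).mono'
    ((hf.1.aemeasurable.pow_const α).mul (hg.1.aemeasurable.pow_const _)).aestronglyMeasurable ?_
  filter_upwards [hf0, hg0] with x hfx hgx
  rw [Real.norm_of_nonneg (mul_nonneg (Real.rpow_nonneg hfx _) (Real.rpow_nonneg hgx _))]
  exact Real.geom_mean_le_arith_mean2_weighted hα0 (by linarith) hfx hgx (by ring)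

theorem MeasureTheory.Integrable.rpow_of_le_one [IsFiniteMeasure μ] (hf : Integrable f μ)
    (hf0 : 0 ≤ᵐ[μ] f) (hα0 : 0 ≤ α) (hα1 : α ≤ 1) : Integrable (fun x => f x ^ α) μ := by
  simpa using hf.rpow_mul_rpow_one_sub (integrable_const 1) hf0 (ae_of_all _ fun _ => zero_le_one)
    hα0 hα1

theorem MeasureTheory.integral_rpow_mul_rpow_one_sub_le (hf : Integrable f μ) (hg : Integrable g μ)
    (hf0 : 0 ≤ᵐ[μ] f) (hg0 : 0 ≤ᵐ[μ] g) (hα0 : 0 ≤ α) (hα1 : α ≤ 1) :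
    ∫ x, f x ^ α * g x ^ (1 - α) ∂μ ≤ (∫ x, f x ∂μ) ^ α * (∫ x, g x ∂μ) ^ (1 - α) := by
  have hfg0 : 0 ≤ᵐ[μ] fun x => f x ^ α * g x ^ (1 - α) := by
    filter_upwards [hf0, hg0] with x hfx hgx
    exact mul_nonneg (Real.rpow_nonneg hfx _) (Real.rpow_nonneg hgx _)
  rw [integral_eq_lintegral_of_nonneg_ae hfg0
      (hf.rpow_mul_rpow_one_sub hg hf0 hg0 hα0 hα1).1,
    integral_eq_lintegral_of_nonneg_ae hf0 hf.1, integral_eq_lintegral_of_nonneg_ae hg0 hg.1,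
    ENNReal.toReal_rpow, ENNReal.toReal_rpow, ← ENNReal.toReal_mul]
  refine ENNReal.toReal_mono (ENNReal.mul_ne_top
    (ENNReal.rpow_ne_top_of_nonneg hα0 hf.lintegral_lt_top.ne)
    (ENNReal.rpow_ne_top_of_nonneg (sub_nonneg.2 hα1) hg.lintegral_lt_top.ne)) ?_
  calc ∫⁻ x, ENNReal.ofReal (f x ^ α * g x ^ (1 - α)) ∂μ
      = ∫⁻ x, ENNReal.ofReal (f x) ^ α * ENNReal.ofReal (g x) ^ (1 - α) ∂μ := by
        refine lintegral_congr_ae ?_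
        filter_upwards [hf0, hg0] with x hfx hgx
        rw [ENNReal.ofReal_mul (Real.rpow_nonneg hfx _), ENNReal.ofReal_rpow_of_nonneg hfx hα0,
          ENNReal.ofReal_rpow_of_nonneg hgx (sub_nonneg.2 hα1)]
    _ ≤ _ := ENNReal.lintegral_mul_norm_pow_le hf.1.aemeasurable.ennreal_ofReal
        hg.1.aemeasurable.ennreal_ofReal hα0 (sub_nonneg.2 hα1) (by ring)

theorem MeasureTheory.integral_mul_condExp (hm : m ≤ m0) [SigmaFinite (μ.trim hm)] {h : X → ℝ}
    (hh : StronglyMeasurable[m] h) (hhf : Integrable (h * f) μ) (hf : Integrable f μ) :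
    ∫ x, h x * μ[f|m] x ∂μ = ∫ x, h x * f x ∂μ := by
  calc ∫ x, h x * μ[f|m] x ∂μ = ∫ x, μ[h * f|m] x ∂μ :=
        integral_congr_ae (condExp_mul_of_stronglyMeasurable_left hh hhf hf).symm
    _ = ∫ x, h x * f x ∂μ := integral_condExp hm

end Integral

-- The profile `ℓ_{α,r}^opt = (E_μ[ℓ^α | φ_r])^{1/α}`, with `m` the σ-algebra generated by `φ_r`.
noncomputable def powProfile {X : Type*} (m : MeasurableSpace X) {m0 : MeasurableSpace X}
    (μ : Measure[m0] X) (α : ℝ) (ℓ : X → ℝ) : X → ℝ :=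
  fun x => (μ[fun y => ℓ y ^ α|m] x) ^ (1 / α)

section Profile

variable {X : Type*} {m m0 : MeasurableSpace X} {μ : Measure X} {ℓ : X → ℝ} {α : ℝ}

theorem powProfile_one : powProfile m μ 1 ℓ = μ[ℓ|m] := by
  ext x
  simp [powProfile]

theorem stronglyMeasurable_powProfile : StronglyMeasurable[m] (powProfile m μ α ℓ) :=
  (stronglyMeasurable_condExp.measurable.pow_const _).stronglyMeasurable

theorem powProfile_nonneg (hℓ0 : 0 ≤ᵐ[μ] ℓ) : 0 ≤ᵐ[μ] powProfile m μ α ℓ := by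
  filter_upwards [condExp_nonneg (m := m) (hℓ0.mono fun x hx => Real.rpow_nonneg hx α)] with x hx
  exact Real.rpow_nonneg hx _

theorem powProfile_rpow_ae_eq (hℓ0 : 0 ≤ᵐ[μ] ℓ) (hα : α ≠ 0) :
    (fun x => powProfile m μ α ℓ x ^ α) =ᵐ[μ] μ[fun y => ℓ y ^ α|m] := by
  filter_upwards [condExp_nonneg (m := m) (hℓ0.mono fun x hx => Real.rpow_nonneg hx α)] with x hx
  rw [powProfile, ← Real.rpow_mul hx, one_div_mul_cancel hα, Real.rpow_one]

variable [IsFiniteMeasure μ]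

theorem powProfile_le_condExp (hm : m ≤ m0) (hℓ : Integrable ℓ μ) (hℓ0 : 0 ≤ᵐ[μ] ℓ)
    (hα0 : 0 < α) (hα1 : α ≤ 1) : powProfile m μ α ℓ ≤ᵐ[μ] μ[ℓ|m] := by
  have jensen : μ[(· ^ α) ∘ ℓ|m] ≤ᵐ[μ] (· ^ α) ∘ μ[ℓ|m] :=
    (Real.concaveOn_rpow hα0.le hα1).condExp_map_le hm
      (Real.continuous_rpow_const hα0.le).continuousOn.upperSemicontinuousOn hℓ0 isClosed_Ici hℓ
      (hℓ.rpow_of_le_one hℓ0 hα0.le hα1)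
  filter_upwards [jensen, condExp_nonneg (m := m) hℓ0,
    condExp_nonneg (m := m) (hℓ0.mono fun x hx => Real.rpow_nonneg hx α)] with x hx hL1 hg
  calc powProfile m μ α ℓ x ≤ ((μ[ℓ|m] x) ^ α) ^ (1 / α) := Real.rpow_le_rpow hg hx (by positivity)
    _ = μ[ℓ|m] x := by rw [← Real.rpow_mul hL1, mul_one_div_cancel hα0.ne', Real.rpow_one]

theorem integrable_powProfile (hm : m ≤ m0) (hℓ : Integrable ℓ μ) (hℓ0 : 0 ≤ᵐ[μ] ℓ)
    (hα0 : 0 < α) (hα1 : α ≤ 1) : Integrable (powProfile m μ α ℓ) μ := by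
  refine (integrable_condExp (m := m) (f := ℓ)).mono'
    (stronglyMeasurable_powProfile.mono hm).aestronglyMeasurable ?_
  filter_upwards [powProfile_le_condExp hm hℓ hℓ0 hα0 hα1, powProfile_nonneg hℓ0] with x hle h0
  rwa [Real.norm_of_nonneg h0]

theorem integral_rpow_mul_rpow_eq_powProfile (hm : m ≤ m0) (hℓ : Integrable ℓ μ)
    (hℓ0 : 0 ≤ᵐ[μ] ℓ) (hα0 : 0 < α) (hα1 : α ≤ 1) {L : X → ℝ} (hL : StronglyMeasurable[m] L)
    (hLint : Integrable L μ) (hL0 : 0 ≤ᵐ[μ] L) :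
    ∫ x, ℓ x ^ α * L x ^ (1 - α) ∂μ = ∫ x, powProfile m μ α ℓ x ^ α * L x ^ (1 - α) ∂μ := by
  have hint : Integrable (fun x => L x ^ (1 - α) * ℓ x ^ α) μ :=
    (hℓ.rpow_mul_rpow_one_sub hLint hℓ0 hL0 hα0.le hα1).congr (ae_of_all _ fun _ => mul_comm _ _)
  calc ∫ x, ℓ x ^ α * L x ^ (1 - α) ∂μ = ∫ x, L x ^ (1 - α) * μ[fun y => ℓ y ^ α|m] x ∂μ := by
        simp only [integral_mul_condExp hm (hL.measurable.pow_const _).stronglyMeasurable hint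
          (hℓ.rpow_of_le_one hℓ0 hα0.le hα1), mul_comm]
    _ = ∫ x, powProfile m μ α ℓ x ^ α * L x ^ (1 - α) ∂μ := by
        refine integral_congr_ae ?_
        filter_upwards [powProfile_rpow_ae_eq (m := m) hℓ0 hα0.ne'] with x hx
        rw [hx, mul_comm]

theorem integral_rpow_mul_rpow_powProfile (hm : m ≤ m0) (hℓ : Integrable ℓ μ)
    (hℓ0 : 0 ≤ᵐ[μ] ℓ) (hα0 : 0 < α) (hα1 : α ≤ 1) :
    ∫ x, ℓ x ^ α * powProfile m μ α ℓ x ^ (1 - α) ∂μ = ∫ x, powProfile m μ α ℓ x ∂μ := by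
  rw [integral_rpow_mul_rpow_eq_powProfile hm hℓ hℓ0 hα0 hα1 stronglyMeasurable_powProfile
    (integrable_powProfile hm hℓ hℓ0 hα0 hα1) (powProfile_nonneg hℓ0)]
  refine integral_congr_ae ?_
  filter_upwards [powProfile_nonneg (m := m) hℓ0] with x hx
  exact Real.rpow_mul_rpow_one_sub hx α

theorem integral_powProfile_le_integral_rpow_mul_rpow_condExp (hm : m ≤ m0)
    (hℓ : Integrable ℓ μ) (hℓ0 : 0 ≤ᵐ[μ] ℓ) (hα0 : 0 < α) (hα1 : α ≤ 1) :
    ∫ x, powProfile m μ α ℓ x ∂μ ≤ ∫ x, ℓ x ^ α * μ[ℓ|m] x ^ (1 - α) ∂μ := by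
  rw [← integral_rpow_mul_rpow_powProfile hm hℓ hℓ0 hα0 hα1]
  refine integral_mono_ae
    (hℓ.rpow_mul_rpow_one_sub (integrable_powProfile hm hℓ hℓ0 hα0 hα1) hℓ0
      (powProfile_nonneg hℓ0) hα0.le hα1)
    (hℓ.rpow_mul_rpow_one_sub integrable_condExp hℓ0 (condExp_nonneg hℓ0) hα0.le hα1) ?_
  filter_upwards [hℓ0, powProfile_le_condExp hm hℓ hℓ0 hα0 hα1, powProfile_nonneg (m := m) hℓ0]
    with x hℓx hle h0
  exact mul_le_mul_of_nonneg_left (Real.rpow_le_rpow h0 hle (sub_nonneg.2 hα1))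
    (Real.rpow_nonneg hℓx α)

theorem integral_rpow_mul_rpow_condExp_le (hm : m ≤ m0) (hℓ : Integrable ℓ μ)
    (hℓ0 : 0 ≤ᵐ[μ] ℓ) (hα0 : 0 < α) (hα1 : α ≤ 1) :
    ∫ x, ℓ x ^ α * μ[ℓ|m] x ^ (1 - α) ∂μ
      ≤ (∫ x, powProfile m μ α ℓ x ∂μ) ^ α * (∫ x, μ[ℓ|m] x ∂μ) ^ (1 - α) := by
  rw [integral_rpow_mul_rpow_eq_powProfile hm hℓ hℓ0 hα0 hα1 stronglyMeasurable_condExp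
    integrable_condExp (condExp_nonneg hℓ0)]
  exact integral_rpow_mul_rpow_one_sub_le (integrable_powProfile hm hℓ hℓ0 hα0 hα1)
    integrable_condExp (powProfile_nonneg hℓ0) (condExp_nonneg hℓ0) hα0.le hα1

end Profile

section Amari

variable {X : Type*} {mX : MeasurableSpace X} {μ : Measure X} {p q : X → ℝ} {α : ℝ}

theorem amariDiv_eq_of_ne_one (hα : α ≠ 1) (hp : 0 ≤ᵐ[μ] p) (hq : 0 ≤ᵐ[μ] q) :
    amariDiv μ α p q = 1 / (α * (α - 1)) * (∫ x, p x ^ α * q x ^ (1 - α) ∂μ - 1) := by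
  rw [amariDiv, if_neg hα]
  congr 2
  refine integral_congr_ae ?_
  filter_upwards [hp, hq] with x hpx hqx
  exact Real.div_rpow_mul_self hpx hqx hα

theorem amariDiv_div_div (hα : α ≠ 1) (hp : 0 ≤ᵐ[μ] p) (hq : 0 ≤ᵐ[μ] q) {a b : ℝ}
    (ha : 0 ≤ a) (hb : 0 ≤ b) :
    amariDiv μ α (fun x => p x / a) (fun x => q x / b) =
      1 / (α * (α - 1)) * ((∫ x, p x ^ α * q x ^ (1 - α) ∂μ) / (a ^ α * b ^ (1 - α)) - 1) := by
  rw [amariDiv_eq_of_ne_one hα (hp.mono fun x hx => div_nonneg hx ha)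
    (hq.mono fun x hx => div_nonneg hx hb), ← integral_div]
  congr 2
  refine integral_congr_ae ?_
  filter_upwards [hp, hq] with x hpx hqx
  rw [Real.div_rpow hpx ha, Real.div_rpow hqx hb, div_mul_div_comm]

end Amari

theorem quasi_optimal_of_le_of_le_rpow {α t s : ℝ} (hα0 : 0 < α) (hα1 : α < 1) (ht : 0 ≤ t)
    (hts : t ≤ s) (hst : s ≤ t ^ α) :
    1 / (α * (α - 1)) * (t ^ α - 1) ≤ 1 / (α * (α - 1)) * (s - 1) ∧
      1 / (α * (α - 1)) * (s - 1) ≤ 1 / α * (1 / (α * (α - 1)) * (t ^ α - 1)) := by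
  have hc : 1 / (α * (α - 1)) ≤ 0 :=
    one_div_nonpos.2 (mul_nonpos_of_nonneg_of_nonpos hα0.le (by linarith))
  have bernoulli : t ^ α ≤ 1 + α * (t - 1) := by
    simpa using rpow_one_add_le_one_add_mul_self (s := t - 1) (by linarith) hα0.le hα1.le
  refine ⟨mul_le_mul_of_nonpos_left (by linarith) hc, ?_⟩
  have h : (t ^ α - 1) / α ≤ s - 1 := by
    rw [div_le_iff₀ hα0]
    nlinarith
  calc 1 / (α * (α - 1)) * (s - 1) ≤ 1 / (α * (α - 1)) * ((t ^ α - 1) / α) :=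
        mul_le_mul_of_nonpos_left h hc
    _ = 1 / α * (1 / (α * (α - 1)) * (t ^ α - 1)) := by ring

theorem KL_profile_quasi_optimal_general
    {d r : ℕ} (μ : Measure (Fin d → ℝ)) [IsProbabilityMeasure μ]
    (ℓ : (Fin d → ℝ) → ℝ) (φr : (Fin d → ℝ) → (Fin r → ℝ)) (hφ : Measurable φr)
    (hℓ_int : Integrable ℓ μ) (hℓ_pos : ∀ x, 0 < ℓ x)
    (α : ℝ) (hα : α ∈ Set.Ioc (0:ℝ) 1)
    (Zπ : ℝ) (hZπ : Zπ = ∫ x, ℓ x ∂μ) (hZπ_pos : 0 < Zπ)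
    (m : MeasurableSpace (Fin d → ℝ))
    (hm : m = MeasurableSpace.comap φr inferInstance)
    (Lα : (Fin d → ℝ) → ℝ)
    (hLα : Lα = fun x => (condExp m μ (fun y => ℓ y ^ α) x) ^ (1/α))
    (L1 : (Fin d → ℝ) → ℝ) (hL1 : L1 = condExp m μ ℓ)
    (Zα : ℝ) (hZα : Zα = ∫ x, Lα x ∂μ) (hZα_pos : 0 < Zα)
    (Z1 : ℝ) (hZ1 : Z1 = ∫ x, L1 x ∂μ) :
    @amariDiv (Fin d → ℝ) MeasurableSpace.pi μ α (fun x => ℓ x / Zπ) (fun x => Lα x / Zα)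
        ≤ @amariDiv (Fin d → ℝ) MeasurableSpace.pi μ α (fun x => ℓ x / Zπ) (fun x => L1 x / Z1) ∧
    @amariDiv (Fin d → ℝ) MeasurableSpace.pi μ α (fun x => ℓ x / Zπ) (fun x => L1 x / Z1)
        ≤ (1 / α) * @amariDiv (Fin d → ℝ) MeasurableSpace.pi μ α (fun x => ℓ x / Zπ) (fun x => Lα x / Zα) := by
  obtain ⟨hα0, hα1⟩ := hα
  obtain rfl : Lα = powProfile m μ α ℓ := hLα
  rcases hα1.eq_or_lt with rfl | hα1
  · obtain rfl : powProfile m μ 1 ℓ = L1 := powProfile_one.trans hL1.symm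
    obtain rfl : Zα = Z1 := hZα.trans hZ1.symm
    exact ⟨le_rfl, by rw [div_one, one_mul]⟩
  have hmle : m ≤ MeasurableSpace.pi := hm ▸ hφ.comap_le
  have hℓ0 : 0 ≤ᵐ[μ] ℓ := ae_of_all _ fun x => (hℓ_pos x).le
  have hZ1π : Z1 = Zπ := by rw [hZ1, hL1, hZπ, integral_condExp hmle]
  have hlow := integral_powProfile_le_integral_rpow_mul_rpow_condExp hmle hℓ_int hℓ0 hα0 hα1.le
  have hup := integral_rpow_mul_rpow_condExp_le hmle hℓ_int hℓ0 hα0 hα1.le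
  rw [← hZα, ← hL1] at hlow
  rw [← hZα, ← hL1, ← hZ1, hZ1π] at hup
  rw [amariDiv_div_div hα1.ne hℓ0 (powProfile_nonneg hℓ0) hZπ_pos.le hZα_pos.le,
    amariDiv_div_div hα1.ne hℓ0 (hL1 ▸ condExp_nonneg hℓ0) hZπ_pos.le (hZ1π ▸ hZπ_pos.le),
    integral_rpow_mul_rpow_powProfile hmle hℓ_int hℓ0 hα0 hα1.le, ← hZα, hZ1π,
    Real.rpow_mul_rpow_one_sub hZπ_pos.le]
  rw [Real.div_mul_rpow_one_sub_eq_div_rpow hZα_pos hZπ_pos.le]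
  refine quasi_optimal_of_le_of_le_rpow hα0 hα1 (by positivity)
    (div_le_div_of_nonneg_right hlow hZπ_pos.le) ?_
  rw [Real.div_rpow_eq_rpow_mul_rpow_one_sub_div hZα_pos.le hZπ_pos]
  exact div_le_div_of_nonneg_right hup hZπ_pos.le

/-- Quasi-optimality of the KL-optimal profile: for `0 < α ≤ 1`,
`D_α(π‖π_{α,r}^opt) ≤ D_α(π‖π_{1,r}^opt) ≤ (1/α) D_α(π‖π_{α,r}^opt)`. -/
theorem KL_profile_quasi_optimal
    {d r : ℕ} (μ : Measure (Fin d → ℝ)) [IsProbabilityMeasure μ]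
    (ℓ : (Fin d → ℝ) → ℝ) (φr : (Fin d → ℝ) → (Fin r → ℝ)) (hφ : Measurable φr)
    (hℓ_int : Integrable ℓ μ) (hℓ_pos : ∀ x, 0 < ℓ x)
    (α : ℝ) (hα : α ∈ Set.Ioc (0:ℝ) 1)
    (Zπ : ℝ) (hZπ : Zπ = ∫ x, ℓ x ∂μ) (hZπ_pos : 0 < Zπ)
    (m : MeasurableSpace (Fin d → ℝ))
    (hm : m = MeasurableSpace.comap φr inferInstance)
    (Lα : (Fin d → ℝ) → ℝ)
    (hLα : Lα = fun x => (condExp m μ (fun y => ℓ y ^ α) x) ^ (1/α))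
    (L1 : (Fin d → ℝ) → ℝ) (hL1 : L1 = condExp m μ ℓ)
    (Zα : ℝ) (hZα : Zα = ∫ x, Lα x ∂μ) (hZα_pos : 0 < Zα)
    (Z1 : ℝ) (hZ1 : Z1 = ∫ x, L1 x ∂μ) (hZ1_pos : 0 < Z1) :
    @amariDiv (Fin d → ℝ) MeasurableSpace.pi μ α (fun x => ℓ x / Zπ) (fun x => Lα x / Zα)
        ≤ @amariDiv (Fin d → ℝ) MeasurableSpace.pi μ α (fun x => ℓ x / Zπ) (fun x => L1 x / Z1) ∧
    @amariDiv (Fin d → ℝ) MeasurableSpace.pi μ α (fun x => ℓ x / Zπ) (fun x => L1 x / Z1)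
        ≤ (1 / α) * @amariDiv (Fin d → ℝ) MeasurableSpace.pi μ α (fun x => ℓ x / Zπ) (fun x => Lα x / Zα) :=
  KL_profile_quasi_optimal_general μ ℓ φr hφ hℓ_int hℓ_pos α hα Zπ hZπ hZπ_pos m hm Lα hLα L1 hL1 Zα
    hZα hZα_pos Z1 hZ1
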